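/- Let n ≥ 1, let C > 0, and let ω_i^(k) (for i, k = 1, …, n) be positive real numbers with geometric means ω_i* = (∏_{k=1}^n ω_i^(k))^{1/n}. If A = ‖a_{ik}‖ and B = ‖b_{ik}‖ are two n × n positive matrices each satisfying, with λ_A = (∏_{i,r} a_{ir})^{1/n²} (respectively λ_B = (∏_{i,r} b_{ir})^{1/n²}), the relations ω_i* = C (∏_{k=1}^n a_{ik})^{1/n} and ω_i^(k) = (1/λ_A) a_{ik} ω_k* (respectively with B and λ_B), then A = B. Explicitly, the unique such matrix is given by a_{ik} = λ ω_i^(k)/ω_k* with λ = (1/C)(∏_{k=1}^n ω_k*)^{1/n}. -/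

import Mathlib

/-!
The second relation says that `a i k = λ_A * ω i k / ωs k`, so every row of `A` is `λ_A` times a
fixed row. Taking row geometric means turns the first relation into `ωs i = C * λ_A * ωs i / P`
with `P = (∏ k, ωs k) ^ (1 / n)`, which pins down `λ_A = P / C`, and with it every entry of `A`.
-/

open Finset Real

variable {ι : Type*} [Fintype ι]

lemma prod_const_mul_rpow_one_div_card [Nonempty ι] {c : ℝ} (hc : 0 ≤ c) {x : ι → ℝ}
    (hx : ∀ i, 0 ≤ x i) :
    (∏ i, c * x i) ^ ((1 : ℝ) / Fintype.card ι) = c * (∏ i, x i) ^ ((1 : ℝ) / Fintype.card ι) := by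
  have hcard : (Fintype.card ι : ℝ) ≠ 0 := by positivity
  rw [prod_mul_distrib, prod_const, card_univ, mul_rpow (by positivity) (prod_nonneg fun i _ => hx i),
    ← rpow_natCast, ← rpow_mul hc, mul_one_div_cancel hcard, rpow_one]

theorem entry_eq_of_geomMean_relations {C : ℝ} {ω : ι → ι → ℝ} (hω : ∀ i k, 0 < ω i k)
    {ωs : ι → ℝ} (hωs : ∀ i, ωs i = (∏ k, ω i k) ^ ((1 : ℝ) / Fintype.card ι))
    {a : ι → ι → ℝ} (ha : ∀ i k, 0 < a i k)
    (ha1 : ∀ i, ωs i = C * (∏ k, a i k) ^ ((1 : ℝ) / Fintype.card ι))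
    (ha2 : ∀ i k, ω i k =
      (1 / ((∏ i, ∏ r, a i r) ^ ((1 : ℝ) / (Fintype.card ι : ℝ) ^ 2))) * a i k * ωs k)
    (i k : ι) :
    a i k = ((1 / C) * (∏ r, ωs r) ^ ((1 : ℝ) / Fintype.card ι)) * ω i k / ωs k := by
  have : Nonempty ι := ⟨i⟩
  have hωs_pos : ∀ i, 0 < ωs i := fun i => hωs i ▸ rpow_pos_of_pos (prod_pos fun k _ => hω i k) _
  set P := (∏ r, ωs r) ^ ((1 : ℝ) / Fintype.card ι)
  have hP : 0 < P := rpow_pos_of_pos (prod_pos fun r _ => hωs_pos r) _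
  set lam := (∏ i, ∏ r, a i r) ^ ((1 : ℝ) / (Fintype.card ι : ℝ) ^ 2)
  have hlam : 0 < lam := rpow_pos_of_pos (prod_pos fun i _ => prod_pos fun r _ => ha i r) _
  have ha_eq : ∀ i k, a i k = lam * (ω i k / ωs k) := fun i k => by
    rw [ha2 i k]
    field_simp [(hωs_pos k).ne']
  have hrow : (∏ k, a i k) ^ ((1 : ℝ) / Fintype.card ι) = lam * (ωs i / P) := by
    rw [prod_congr rfl fun k _ => ha_eq i k,
      prod_const_mul_rpow_one_div_card hlam.le fun k => (div_pos (hω i k) (hωs_pos k)).le,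
      prod_div_distrib, div_rpow (prod_pos fun k _ => hω i k).le (prod_pos fun k _ => hωs_pos k).le,
      ← hωs i]
  have hClam : C * lam = P := by
    have h := ha1 i
    rw [hrow] at h
    field_simp [(hωs_pos i).ne'] at h
    linarith
  have hC : C ≠ 0 := by rintro rfl; linarith
  rw [ha_eq i k, ← hClam]
  field_simp

theorem gmm_matrix_unique_general (n : ℕ) (C : ℝ)
    (ω : Fin n → Fin n → ℝ) (hω : ∀ i k, 0 < ω i k)
    (ωs : Fin n → ℝ) (hωs : ∀ i, ωs i = (∏ k, ω i k) ^ ((1 : ℝ) / n))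
    (a b : Fin n → Fin n → ℝ)
    (ha : ∀ i k, 0 < a i k) (hb : ∀ i k, 0 < b i k)
    (ha1 : ∀ i, ωs i = C * (∏ k, a i k) ^ ((1 : ℝ) / n))
    (ha2 : ∀ i k,
      ω i k = (1 / ((∏ i, ∏ r, a i r) ^ ((1 : ℝ) / (n : ℝ) ^ 2))) * a i k * ωs k)
    (hb1 : ∀ i, ωs i = C * (∏ k, b i k) ^ ((1 : ℝ) / n))
    (hb2 : ∀ i k,
      ω i k = (1 / ((∏ i, ∏ r, b i r) ^ ((1 : ℝ) / (n : ℝ) ^ 2))) * b i k * ωs k) :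
    a = b ∧
    (∀ i k, a i k = ((1 / C) * (∏ r, ωs r) ^ ((1 : ℝ) / n)) * ω i k / ωs k) := by
  have hsolve := @entry_eq_of_geomMean_relations (Fin n) _ C ω hω ωs
  simp only [Fintype.card_fin] at hsolve
  have ha_eq := hsolve hωs ha ha1 ha2
  have hb_eq := hsolve hωs hb hb1 hb2
  exact ⟨funext₂ fun i k => (ha_eq i k).trans (hb_eq i k).symm, ha_eq⟩

/-- Uniqueness of the matrix A associated to a positive family,
together with its explicit form a_{ik} = λ ω_i^(k)/ω_k* with
λ = (1/C)(∏ ω_k*)^{1/n}. -/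
theorem gmm_matrix_unique (n : ℕ) (hn : 1 ≤ n) (C : ℝ) (hC : 0 < C)
    (ω : Fin n → Fin n → ℝ) (hω : ∀ i k, 0 < ω i k)
    (ωs : Fin n → ℝ) (hωs : ∀ i, ωs i = (∏ k, ω i k) ^ ((1 : ℝ) / n))
    (a b : Fin n → Fin n → ℝ)
    (ha : ∀ i k, 0 < a i k) (hb : ∀ i k, 0 < b i k)
    (ha1 : ∀ i, ωs i = C * (∏ k, a i k) ^ ((1 : ℝ) / n))
    (ha2 : ∀ i k,
      ω i k = (1 / ((∏ i, ∏ r, a i r) ^ ((1 : ℝ) / (n : ℝ) ^ 2))) * a i k * ωs k)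
    (hb1 : ∀ i, ωs i = C * (∏ k, b i k) ^ ((1 : ℝ) / n))
    (hb2 : ∀ i k,
      ω i k = (1 / ((∏ i, ∏ r, b i r) ^ ((1 : ℝ) / (n : ℝ) ^ 2))) * b i k * ωs k) :
    a = b ∧
    (∀ i k, a i k = ((1 / C) * (∏ r, ωs r) ^ ((1 : ℝ) / n)) * ω i k / ωs k) :=
  gmm_matrix_unique_general n C ω hω ωs hωs a b ha hb ha1 ha2 hb1 hb2
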